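/- Let v ∈ W and let J be the set of simple reflections s_β that fix the weight w₀·(v·e_v), with W_J the subgroup of W they generate. Then for every simple root β, the root (w₀v⁻¹w₀)(β) is negative if and only if s_β ∉ J; consequently w₀v⁻¹w₀ is the unique element of minimal length in its coset (w₀v⁻¹w₀)W_J. -/

import Mathlib

open scoped InnerProductSpace Classical

noncomputable section

/-- A reduced crystallographic root system `Φ` spanning a finite-dimensional real inner
product space `V`, together with a choice of simple roots `π` (determining the positive
system), the corresponding fundamental weights `ω`, the reflections `s`, the Weyl group
`W` and the weight lattice `X`. -/
structure RootSystemData (V : Type) [NormedAddCommGroup V] [InnerProductSpace ℝ V]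
    [FiniteDimensional ℝ V] where
  /-- the (finite) set of roots -/
  Φ : Finset V
  /-- the rank -/
  r : ℕ
  /-- the simple roots `α₁, …, α_r` -/
  π : Fin r → V
  /-- the fundamental weights `ω₁, …, ω_r` -/
  ω : Fin r → V
  /-- the orthogonal reflection attached to a root -/
  s : V → (V ≃ₗ[ℝ] V)
  /-- the Weyl group -/
  W : Subgroup (V ≃ₗ[ℝ] V)
  /-- the weight lattice -/
  X : AddSubgroup V
  root_ne_zero : ∀ α ∈ Φ, α ≠ (0 : V)
  root_span : Submodule.span ℝ (Φ : Set V) = ⊤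
  reduced : ∀ α ∈ Φ, ∀ c : ℝ, c • α ∈ Φ → c = 1 ∨ c = -1
  crystallographic : ∀ α ∈ Φ, ∀ β ∈ Φ, ∃ n : ℤ, 2 * ⟪β, α⟫_ℝ / ⟪α, α⟫_ℝ = (n : ℝ)
  s_apply : ∀ α ∈ Φ, ∀ v : V, s α v = v - (2 * ⟪v, α⟫_ℝ / ⟪α, α⟫_ℝ) • α
  refl_stable : ∀ α ∈ Φ, ∀ β ∈ Φ, s α β ∈ Φ
  W_eq : W = Subgroup.closure {g : V ≃ₗ[ℝ] V | ∃ α ∈ Φ, g = s α}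
  inner_invariant : ∀ g ∈ W, ∀ u v : V, ⟪g u, g v⟫_ℝ = ⟪u, v⟫_ℝ
  simple_mem : ∀ i, π i ∈ Φ
  simple_indep : LinearIndependent ℝ π
  pos_or_neg : ∀ α ∈ Φ,
      (∃ c : Fin r → ℝ, (∀ i, 0 ≤ c i) ∧ α = ∑ i, c i • π i) ∨
      (∃ c : Fin r → ℝ, (∀ i, 0 ≤ c i) ∧ -α = ∑ i, c i • π i)
  fund : ∀ i j, 2 * ⟪ω i, π j⟫_ℝ / ⟪π j, π j⟫_ℝ = if i = j then (1 : ℝ) else 0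
  X_eq : X = AddSubgroup.closure (Set.range ω)
  X_stable : ∀ g ∈ W, ∀ x ∈ X, g x ∈ X

/-- The pairing `(v, α∨) = 2(v,α)/(α,α)` of a vector with the coroot of `α`. -/
def pairing {V : Type} [NormedAddCommGroup V] [InnerProductSpace ℝ V]
    (v α : V) : ℝ := 2 * ⟪v, α⟫_ℝ / ⟪α, α⟫_ℝ

namespace RootSystemData

variable {V : Type} [NormedAddCommGroup V] [InnerProductSpace ℝ V] [FiniteDimensional ℝ V]
variable (C : RootSystemData V)

/-- `α` is a nonnegative combination of the simple roots (a positive root, if `α ∈ Φ`). -/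
def IsPos (α : V) : Prop := ∃ c : Fin C.r → ℝ, (∀ i, 0 ≤ c i) ∧ α = ∑ i, c i • C.π i

/-- `α` is a nonpositive combination of the simple roots (a negative root, if `α ∈ Φ`). -/
def IsNeg (α : V) : Prop := C.IsPos (-α)

/-- A weight is dominant if it pairs nonnegatively with all simple coroots. -/
def IsDominant (lam : V) : Prop := ∀ i, 0 ≤ pairing lam (C.π i)

/-- The product of the simple reflections along a word. -/
def wordProd (l : List (Fin C.r)) : V ≃ₗ[ℝ] V := (l.map fun i => C.s (C.π i)).prod

/-- The length of `w`: the least length of an expression of `w` as a product of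
simple reflections. -/
def length (w : V ≃ₗ[ℝ] V) : ℕ :=
  sInf {n | ∃ l : List (Fin C.r), l.length = n ∧ C.wordProd l = w}

/-- The (strong) Bruhat order on the Weyl group: `u ≤ v` iff `v` is obtained from `u`
by successively multiplying by reflections, increasing the length at each step. -/
def BruhatLE (u v : V ≃ₗ[ℝ] V) : Prop :=
  Relation.ReflTransGen
    (fun a b => (∃ α ∈ C.Φ, b = a * C.s α) ∧ C.length a < C.length b) u v

/-- The Steinberg weight `e_v = v⁻¹ ⬝ ∑_{i : v⁻¹ α_i < 0} ω_i`. -/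
def steinberg (v : V ≃ₗ[ℝ] V) : V :=
  v⁻¹ (∑ i ∈ Finset.univ.filter (fun i => C.IsNeg (v⁻¹ (C.π i))), C.ω i)

/-- The excellent order on weights: `λ ≤ₑ μ` iff `(λ,λ) < (μ,μ)`, or `λ = wν`, `μ = zν`
for some dominant `ν ∈ X` and `w ≤ z` in the Bruhat order. -/
def ExcLE (lam mu : V) : Prop :=
  ⟪lam, lam⟫_ℝ < ⟪mu, mu⟫_ℝ ∨
    ∃ nu ∈ C.X, C.IsDominant nu ∧
      ∃ w ∈ C.W, ∃ z ∈ C.W, C.BruhatLE w z ∧ lam = w nu ∧ mu = z nu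

/-- The strict excellent order. -/
def ExcLT (lam mu : V) : Prop := C.ExcLE lam mu ∧ lam ≠ mu

/-- The antipodal excellent order: `λ ≤ₐ μ` iff `-λ ≤ₑ -μ`. -/
def AntiLE (lam mu : V) : Prop := C.ExcLE (-lam) (-mu)

/-- The strict antipodal excellent order. -/
def AntiLT (lam mu : V) : Prop := C.AntiLE lam mu ∧ lam ≠ mu

/-- The dominance order: `μ ≤_d ν` iff `ν - μ` is a nonnegative integer combination of
the positive roots. -/
def DomLE (mu nu : V) : Prop :=
  ∃ c : V → ℕ, nu - mu = ∑ α ∈ C.Φ.filter (fun a => C.IsPos a), (c α : ℝ) • α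

theorem omega_mem (i : Fin C.r) : C.ω i ∈ C.X := by
  rw [C.X_eq]; exact AddSubgroup.subset_closure ⟨i, rfl⟩

theorem steinberg_mem {v : V ≃ₗ[ℝ] V} (hv : v ∈ C.W) : C.steinberg v ∈ C.X :=
  C.X_stable _ (inv_mem hv) _ (AddSubgroup.sum_mem _ fun i _ => C.omega_mem i)

/-- The group ring `ℤ[X]` of the weight lattice. -/
abbrev GroupRing := AddMonoidAlgebra ℤ ↥C.X

/-- The basis element `e^λ` of `ℤ[X]`. -/
def expo (x : V) (hx : x ∈ C.X) : C.GroupRing := AddMonoidAlgebra.single ⟨x, hx⟩ 1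

/-- `e^λ`, defined for all `λ : V` (and zero off the lattice). -/
def expoOf (x : V) : C.GroupRing := if hx : x ∈ C.X then C.expo x hx else 0

/-- The coefficient of `e^x` in an element of `ℤ[X]`. -/
def coeff (m : C.GroupRing) (x : ↥C.X) : ℤ := m.coeff x

/-- The support of an element of `ℤ[X]`. -/
def supp (m : C.GroupRing) : Finset ↥C.X := m.coeff.support

/-- The action of `g ∈ W` on the weight lattice. -/
def actX (g : V ≃ₗ[ℝ] V) (hg : g ∈ C.W) : ↥C.X → ↥C.X :=
  fun x => ⟨g x, C.X_stable g hg x.1 x.2⟩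

/-- The action of `g ∈ W` on `ℤ[X]`, with `e^λ ↦ e^{gλ}`. -/
def wAct (g : V ≃ₗ[ℝ] V) (hg : g ∈ C.W) (m : C.GroupRing) : C.GroupRing :=
  AddMonoidAlgebra.ofCoeff (Finsupp.mapDomain (C.actX g hg) m.coeff)

/-- `m` lies in the invariant subring `ℤ[X]^W`. -/
def IsWInvariant (m : C.GroupRing) : Prop := ∀ g (hg : g ∈ C.W), C.wAct g hg m = m

/-- The parabolic subgroup `W_{Π'}` generated by the simple reflections `s_α, α ∈ Π'`,
for a subset `Π'` of the simple roots (given by a subset `J` of the index set). -/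
def parabolicSubgroup (J : Set (Fin C.r)) : Subgroup (V ≃ₗ[ℝ] V) :=
  Subgroup.closure {g | ∃ i ∈ J, g = C.s (C.π i)}

theorem parabolic_le (J : Set (Fin C.r)) : C.parabolicSubgroup J ≤ C.W := by
  refine (Subgroup.closure_le _).2 ?_
  rintro g ⟨i, _, rfl⟩
  rw [C.W_eq]
  exact Subgroup.subset_closure ⟨C.π i, C.simple_mem i, rfl⟩

/-- `m` lies in the invariant subring `ℤ[X]^H` for a subgroup `H ≤ W`. -/
def IsInvariantUnder (H : Subgroup (V ≃ₗ[ℝ] V)) (hH : H ≤ C.W) (m : C.GroupRing) : Prop :=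
  ∀ g (hg : g ∈ H), C.wAct g (hH hg) m = m

/-- `v` is of minimal length in its coset `v ⬝ W_{Π'}`. -/
def IsMinCosetRep (J : Set (Fin C.r)) (v : V ≃ₗ[ℝ] V) : Prop :=
  v ∈ C.W ∧ ∀ z ∈ C.parabolicSubgroup J, C.length v ≤ C.length (v * z)

/-- The subgroup generated by the simple reflections fixing a given vector. -/
def fixSubgroup (x : V) : Subgroup (V ≃ₗ[ℝ] V) :=
  Subgroup.closure {g | ∃ i : Fin C.r, C.s (C.π i) x = x ∧ g = C.s (C.π i)}

end RootSystemData

/-!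
Write `σ = v e_v = ∑_{k ∈ S} ω_k` with `S = {k | v⁻¹ α_k < 0}`, so the fixed weight is `w₀ σ`.
Since `-w₀` permutes the simple roots, say `w₀ α_i = -α_j`, both conditions on `i` reduce to
`j ∈ S`: `(w₀ v⁻¹ w₀) α_i = -w₀ (v⁻¹ α_j)` is negative iff `v⁻¹ α_j` is, and
`(w₀ σ, α_i) = -(σ, α_j)` vanishes iff `j ∉ S`. So `u = w₀ v⁻¹ w₀` keeps the simple roots of `J`
positive. For such `u` and `1 ≠ z ∈ W_J`, the inversion set of `u z` contains the inversions of
`z` together with the `z⁻¹`-translates of those of `u`, and length equals the number of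
inversions, so `ℓ(u z) ≥ ℓ(u) + ℓ(z) > ℓ(u)`.
-/

theorem pairing_sub_smul {V : Type} [NormedAddCommGroup V] [InnerProductSpace ℝ V] (x α : V)
    (c : ℝ) : pairing (x - c • α) α = pairing x α - c * pairing α α := by
  simp only [pairing, inner_sub_left, real_inner_smul_left]
  ring

namespace RootSystemData

variable {V : Type} [NormedAddCommGroup V] [InnerProductSpace ℝ V] [FiniteDimensional ℝ V]
variable (C : RootSystemData V)

theorem inner_self_pos {α : V} (hα : α ∈ C.Φ) : 0 < ⟪α, α⟫_ℝ :=
  real_inner_self_pos.2 (C.root_ne_zero α hα)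

theorem span_range_π : Submodule.span ℝ (Set.range C.π) = ⊤ := by
  rw [eq_top_iff, ← C.root_span, Submodule.span_le]
  intro α hα
  rcases C.pos_or_neg α hα with ⟨c, -, h⟩ | ⟨c, -, h⟩
  · exact (Submodule.mem_span_range_iff_exists_fun ℝ).2 ⟨c, h.symm⟩
  · rw [← neg_neg α, h]
    exact neg_mem ((Submodule.mem_span_range_iff_exists_fun ℝ).2 ⟨c, rfl⟩)

def basis : Module.Basis (Fin C.r) ℝ V :=
  Module.Basis.mk C.simple_indep C.span_range_π.ge

theorem basis_apply (i : Fin C.r) : C.basis i = C.π i := Module.Basis.mk_apply _ _ _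

def coord (i : Fin C.r) : V →ₗ[ℝ] ℝ := C.basis.coord i

theorem sum_coord_smul_π (x : V) : ∑ i, C.coord i x • C.π i = x := by
  simpa [coord, basis_apply] using C.basis.sum_repr x

theorem coord_π (i j : Fin C.r) : C.coord i (C.π j) = if j = i then 1 else 0 := by
  rw [← basis_apply]
  simp [coord, Finsupp.single_apply]

theorem ext_coord {x y : V} (h : ∀ i, C.coord i x = C.coord i y) : x = y :=
  C.basis.ext_elem fun i => h i

theorem isPos_iff {x : V} : C.IsPos x ↔ ∀ i, 0 ≤ C.coord i x := by
  refine ⟨?_, fun h => ⟨fun i => C.coord i x, h, (C.sum_coord_smul_π x).symm⟩⟩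
  rintro ⟨c, hc, rfl⟩ i
  simpa [coord_π] using hc i

theorem isNeg_iff {x : V} : C.IsNeg x ↔ ∀ i, C.coord i x ≤ 0 := by
  simp [IsNeg, isPos_iff]

theorem isNeg_neg {x : V} : C.IsNeg (-x) ↔ C.IsPos x := by
  rw [IsNeg, neg_neg]

theorem isPos_π (i : Fin C.r) : C.IsPos (C.π i) := by
  rw [isPos_iff]; intro j; rw [coord_π]; split_ifs <;> norm_num

theorem isPos_iff_not_isNeg {α : V} (hα : α ∈ C.Φ) : C.IsPos α ↔ ¬ C.IsNeg α := by
  refine ⟨fun hp hn => C.root_ne_zero α hα (C.ext_coord fun i => ?_),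
    (C.pos_or_neg α hα).resolve_right⟩
  simpa using le_antisymm (C.isNeg_iff.1 hn i) (C.isPos_iff.1 hp i)

theorem isNeg_iff_not_isPos {α : V} (hα : α ∈ C.Φ) : C.IsNeg α ↔ ¬ C.IsPos α := by
  rw [C.isPos_iff_not_isNeg hα, not_not]

theorem isPos_of_coord_pos {α : V} (hα : α ∈ C.Φ) {k : Fin C.r} (h : 0 < C.coord k α) :
    C.IsPos α :=
  (C.isPos_iff_not_isNeg hα).2 fun hn => (C.isNeg_iff.1 hn k).not_gt h

theorem isPos_map (f : V →ₗ[ℝ] V) {α : V} (hα : C.IsPos α)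
    (hf : ∀ i, 0 < C.coord i α → C.IsPos (f (C.π i))) : C.IsPos (f α) := by
  rw [isPos_iff] at hα ⊢
  intro k
  rw [← C.sum_coord_smul_π α]
  simp only [map_sum, map_smul, smul_eq_mul]
  refine Finset.sum_nonneg fun i _ => ?_
  rcases (hα i).eq_or_lt with h | h
  · rw [← h, zero_mul]
  · exact mul_nonneg h.le (C.isPos_iff.1 (hf i h) k)

theorem s_apply_eq {α : V} (hα : α ∈ C.Φ) (x : V) : C.s α x = x - pairing x α • α :=
  C.s_apply α hα x

theorem pairing_self {α : V} (hα : α ∈ C.Φ) : pairing α α = 2 := by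
  rw [pairing, mul_div_assoc, div_self (C.inner_self_pos hα).ne', mul_one]

theorem s_apply_self {α : V} (hα : α ∈ C.Φ) : C.s α α = -α := by
  rw [C.s_apply_eq hα, C.pairing_self hα]
  module

theorem s_s {α : V} (hα : α ∈ C.Φ) (x : V) : C.s α (C.s α x) = x := by
  rw [C.s_apply_eq hα, C.s_apply_eq hα, pairing_sub_smul, C.pairing_self hα]
  module

theorem s_mul_self {α : V} (hα : α ∈ C.Φ) : C.s α * C.s α = 1 :=
  LinearEquiv.ext (C.s_s hα)

theorem s_inv {α : V} (hα : α ∈ C.Φ) : (C.s α)⁻¹ = C.s α :=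
  inv_eq_of_mul_eq_one_left (C.s_mul_self hα)

theorem s_mem_W {α : V} (hα : α ∈ C.Φ) : C.s α ∈ C.W := by
  rw [C.W_eq]; exact Subgroup.subset_closure ⟨α, hα, rfl⟩

theorem neg_mem_Φ {α : V} (hα : α ∈ C.Φ) : -α ∈ C.Φ := by
  simpa [C.s_apply_self hα] using C.refl_stable α hα α hα

theorem s_apply_eq_self_iff {α : V} (hα : α ∈ C.Φ) (x : V) :
    C.s α x = x ↔ ⟪x, α⟫_ℝ = 0 := by
  rw [C.s_apply_eq hα, sub_eq_self, smul_eq_zero, or_iff_left (C.root_ne_zero α hα), pairing,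
    div_eq_zero_iff, or_iff_left (C.inner_self_pos hα).ne']
  norm_num

theorem s_neg {α : V} (hα : α ∈ C.Φ) : C.s (-α) = C.s α := by
  ext x
  rw [C.s_apply_eq hα, C.s_apply_eq (C.neg_mem_Φ hα)]
  simp only [pairing, inner_neg_right, inner_neg_left, neg_neg]
  module

theorem apply_mem_Φ {g : V ≃ₗ[ℝ] V} (hg : g ∈ C.W) {α : V} (hα : α ∈ C.Φ) : g α ∈ C.Φ := by
  rw [C.W_eq] at hg
  induction hg using Subgroup.closure_induction'' generalizing α with
  | mem x hx => obtain ⟨β, hβ, rfl⟩ := hx; exact C.refl_stable β hβ α hα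
  | inv_mem x hx => obtain ⟨β, hβ, rfl⟩ := hx; rw [C.s_inv hβ]; exact C.refl_stable β hβ α hα
  | one => exact hα
  | mul x y _ _ hx hy => exact hx (hy hα)

theorem mul_s_mul_inv {g : V ≃ₗ[ℝ] V} (hg : g ∈ C.W) {β : V} (hβ : β ∈ C.Φ) :
    g * C.s β * g⁻¹ = C.s (g β) := by
  ext x
  have hinner : ⟪g⁻¹ x, β⟫_ℝ = ⟪x, g β⟫_ℝ := by
    simpa using (C.inner_invariant g hg (g⁻¹ x) β).symm
  simp only [LinearEquiv.mul_apply, C.s_apply_eq hβ, C.s_apply_eq (C.apply_mem_Φ hg hβ), pairing,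
    map_sub, map_smul, hinner, C.inner_invariant g hg]
  simp

theorem coord_s_π_of_ne {i k : Fin C.r} (hik : i ≠ k) (x : V) :
    C.coord k (C.s (C.π i) x) = C.coord k x := by
  simp [C.s_apply_eq (C.simple_mem i), coord_π, hik]

def ht (x : V) : ℝ := ∑ i, C.coord i x

theorem ht_s_π (i : Fin C.r) (x : V) : C.ht (C.s (C.π i) x) = C.ht x - pairing x (C.π i) := by
  simp [ht, C.s_apply_eq (C.simple_mem i), coord_π, Finset.sum_sub_distrib]

theorem eq_π_of_coord_eq_zero {α : V} (hα : α ∈ C.Φ) (hpos : C.IsPos α) {i : Fin C.r}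
    (h : ∀ j, j ≠ i → C.coord j α = 0) : α = C.π i := by
  have hα_eq : α = C.coord i α • C.π i := by
    conv_lhs => rw [← C.sum_coord_smul_π α]
    exact Finset.sum_eq_single i (fun j _ hj => by rw [h j hj, zero_smul]) (by simp)
  rcases C.reduced _ (C.simple_mem i) _ (hα_eq ▸ hα) with h1 | h1
  · rw [hα_eq, h1, one_smul]
  · linarith [C.isPos_iff.1 hpos i]

theorem isPos_s_π {β : V} (hβ : β ∈ C.Φ) (hpos : C.IsPos β) {i : Fin C.r} (hne : β ≠ C.π i) :
    C.IsPos (C.s (C.π i) β) := by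
  obtain ⟨k, hki, hk⟩ : ∃ k, k ≠ i ∧ C.coord k β ≠ 0 := by
    by_contra! h
    exact hne (C.eq_π_of_coord_eq_zero hβ hpos h)
  refine C.isPos_of_coord_pos (C.refl_stable _ (C.simple_mem i) _ hβ) (k := k) ?_
  rw [C.coord_s_π_of_ne (Ne.symm hki)]
  exact (C.isPos_iff.1 hpos k).lt_of_ne' hk

theorem wordProd_nil : C.wordProd [] = 1 := rfl

theorem wordProd_cons (i : Fin C.r) (l : List (Fin C.r)) :
    C.wordProd (i :: l) = C.s (C.π i) * C.wordProd l := by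
  simp [wordProd]

theorem wordProd_append (l l' : List (Fin C.r)) :
    C.wordProd (l ++ l') = C.wordProd l * C.wordProd l' := by
  simp [wordProd]

theorem wordProd_singleton (i : Fin C.r) : C.wordProd [i] = C.s (C.π i) := by
  simp [wordProd]

theorem wordProd_reverse (l : List (Fin C.r)) :
    C.wordProd l.reverse = (C.wordProd l)⁻¹ := by
  induction l with
  | nil => simp [wordProd_nil]
  | cons i t ih =>
    rw [List.reverse_cons, wordProd_append, ih, wordProd_singleton, wordProd_cons, mul_inv_rev,
      C.s_inv (C.simple_mem i)]

theorem wordProd_mem_W (l : List (Fin C.r)) : C.wordProd l ∈ C.W := by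
  induction l with
  | nil => exact one_mem _
  | cons i t ih => rw [wordProd_cons]; exact mul_mem (C.s_mem_W (C.simple_mem i)) ih

theorem exists_s_π_isPos_ht_lt {α : V} (hα : α ∈ C.Φ) (hpos : C.IsPos α)
    (hne : ∀ i, α ≠ C.π i) :
    ∃ i, C.IsPos (C.s (C.π i) α) ∧ C.ht (C.s (C.π i) α) < C.ht α := by
  have hsum : ⟪α, α⟫_ℝ = ∑ i, C.coord i α * ⟪C.π i, α⟫_ℝ := by
    nth_rw 1 [← C.sum_coord_smul_π α]
    simp only [sum_inner, real_inner_smul_left]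
  obtain ⟨i, hi⟩ : ∃ i, 0 < C.coord i α * ⟪C.π i, α⟫_ℝ := by
    by_contra! h
    linarith [C.inner_self_pos hα, hsum ▸ Finset.sum_nonpos fun i _ => h i]
  have hinner : 0 < ⟪α, C.π i⟫_ℝ :=
    real_inner_comm α (C.π i) ▸ pos_of_mul_pos_right hi (C.isPos_iff.1 hpos i)
  refine ⟨i, C.isPos_s_π hα hpos (hne i), ?_⟩
  rw [ht_s_π, sub_lt_self_iff, pairing]
  exact div_pos (by linarith) (C.inner_self_pos (C.simple_mem i))

/-- Reflecting in simple roots that lower the height eventually reaches a simple root. -/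
theorem exists_wordProd_apply_π {α : V} (hα : α ∈ C.Φ) (hpos : C.IsPos α) :
    ∃ (l : List (Fin C.r)) (i : Fin C.r), C.wordProd l (C.π i) = α := by
  by_cases hs : ∃ i, α = C.π i
  · obtain ⟨i, rfl⟩ := hs
    exact ⟨[], i, rfl⟩
  push Not at hs
  obtain ⟨i, hpos', hlt⟩ := C.exists_s_π_isPos_ht_lt hα hpos hs
  obtain ⟨l, j, h⟩ := exists_wordProd_apply_π (C.refl_stable _ (C.simple_mem i) _ hα) hpos'
  exact ⟨i :: l, j, by rw [wordProd_cons, LinearEquiv.mul_apply, h, C.s_s (C.simple_mem i)]⟩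
termination_by (C.Φ.filter fun γ => C.ht γ < C.ht α).card
decreasing_by
  refine Finset.card_lt_card ⟨fun γ hγ => ?_, fun hsub => ?_⟩
  · simp only [Finset.mem_filter] at hγ ⊢
    exact ⟨hγ.1, hγ.2.trans hlt⟩
  · simpa using hsub (Finset.mem_filter.2 ⟨C.refl_stable _ (C.simple_mem i) _ hα, hlt⟩)

theorem exists_wordProd_eq {g : V ≃ₗ[ℝ] V} (hg : g ∈ C.W) : ∃ l, C.wordProd l = g := by
  have hs : ∀ α ∈ C.Φ, C.IsPos α → ∃ l, C.wordProd l = C.s α := by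
    intro α hα hpos
    obtain ⟨l, i, rfl⟩ := C.exists_wordProd_apply_π hα hpos
    refine ⟨l ++ [i] ++ l.reverse, ?_⟩
    rw [wordProd_append, wordProd_append, wordProd_singleton, wordProd_reverse,
      C.mul_s_mul_inv (C.wordProd_mem_W l) (C.simple_mem i)]
  rw [C.W_eq] at hg
  induction hg using Subgroup.closure_induction with
  | mem x hx =>
    obtain ⟨α, hα, rfl⟩ := hx
    rcases C.pos_or_neg α hα with hpos | hneg
    · exact hs α hα hpos
    · simpa [C.s_neg hα] using hs (-α) (C.neg_mem_Φ hα) hneg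
  | one => exact ⟨[], rfl⟩
  | mul x y _ _ hx hy =>
    obtain ⟨l, rfl⟩ := hx
    obtain ⟨m, rfl⟩ := hy
    exact ⟨l ++ m, C.wordProd_append l m⟩
  | inv x _ hx =>
    obtain ⟨l, rfl⟩ := hx
    exact ⟨l.reverse, C.wordProd_reverse l⟩

theorem length_wordProd_le (l : List (Fin C.r)) : C.length (C.wordProd l) ≤ l.length :=
  Nat.sInf_le ⟨l, rfl, rfl⟩

theorem exists_reduced_word {g : V ≃ₗ[ℝ] V} (hg : g ∈ C.W) :
    ∃ l : List (Fin C.r), l.length = C.length g ∧ C.wordProd l = g := by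
  obtain ⟨l, hl⟩ := C.exists_wordProd_eq hg
  exact Nat.sInf_mem (s := {n | ∃ l : List (Fin C.r), l.length = n ∧ C.wordProd l = g})
    ⟨l.length, l, rfl, hl⟩

theorem eq_one_of_length_eq_zero {g : V ≃ₗ[ℝ] V} (hg : g ∈ C.W) (h : C.length g = 0) :
    g = 1 := by
  obtain ⟨l, hl, rfl⟩ := C.exists_reduced_word hg
  rw [h, List.length_eq_zero_iff] at hl
  rw [hl, wordProd_nil]

theorem length_mul_s_π_le {g : V ≃ₗ[ℝ] V} (hg : g ∈ C.W) (j : Fin C.r) :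
    C.length (g * C.s (C.π j)) ≤ C.length g + 1 := by
  obtain ⟨l, hl, rfl⟩ := C.exists_reduced_word hg
  simpa [wordProd_append, wordProd_singleton, hl] using C.length_wordProd_le (l ++ [j])

def inversionSet (w : V ≃ₗ[ℝ] V) : Finset V :=
  C.Φ.filter fun α => C.IsPos α ∧ C.IsNeg (w α)

def inversionCount (w : V ≃ₗ[ℝ] V) : ℕ := (C.inversionSet w).card

theorem mem_inversionSet {w : V ≃ₗ[ℝ] V} {α : V} :
    α ∈ C.inversionSet w ↔ α ∈ C.Φ ∧ C.IsPos α ∧ C.IsNeg (w α) :=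
  Finset.mem_filter

theorem inversionSet_eq_empty {g : V ≃ₗ[ℝ] V} (hg : g ∈ C.W) (h : ∀ i, C.IsPos (g (C.π i))) :
    C.inversionSet g = ∅ := by
  refine Finset.eq_empty_of_forall_notMem fun α hα => ?_
  obtain ⟨hαΦ, hpos, hneg⟩ := C.mem_inversionSet.1 hα
  exact (C.isPos_iff_not_isNeg (C.apply_mem_Φ hg hαΦ)).1
    (C.isPos_map g.toLinearMap hpos fun i _ => h i) hneg

theorem inversionSet_mul_s_π {w : V ≃ₗ[ℝ] V} (hw : w ∈ C.W) {i : Fin C.r}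
    (hpos : C.IsPos (w (C.π i))) :
    C.inversionSet (w * C.s (C.π i)) =
      insert (C.π i) ((C.inversionSet w).image (C.s (C.π i))) := by
  have hΦi := C.simple_mem i
  ext γ
  simp only [mem_inversionSet, Finset.mem_insert, Finset.mem_image, LinearEquiv.mul_apply]
  constructor
  · rintro ⟨hγΦ, hγpos, hγneg⟩
    by_cases h : γ = C.π i
    · exact Or.inl h
    · exact Or.inr ⟨C.s (C.π i) γ, ⟨C.refl_stable _ hΦi _ hγΦ, C.isPos_s_π hγΦ hγpos h, hγneg⟩,
        C.s_s hΦi γ⟩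
  · rintro (rfl | ⟨δ, ⟨hδΦ, hδpos, hδneg⟩, rfl⟩)
    · refine ⟨hΦi, C.isPos_π i, ?_⟩
      rwa [C.s_apply_self hΦi, map_neg, isNeg_neg]
    · have hδne : δ ≠ C.π i := by
        rintro rfl
        exact (C.isPos_iff_not_isNeg (C.apply_mem_Φ hw hΦi)).1 hpos hδneg
      exact ⟨C.refl_stable _ hΦi _ hδΦ, C.isPos_s_π hδΦ hδpos hδne, by rwa [C.s_s hΦi]⟩

theorem inversionCount_mul_s_π_of_isPos {w : V ≃ₗ[ℝ] V} (hw : w ∈ C.W) {i : Fin C.r}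
    (hpos : C.IsPos (w (C.π i))) :
    C.inversionCount (w * C.s (C.π i)) = C.inversionCount w + 1 := by
  have hΦi := C.simple_mem i
  have hnotMem : C.π i ∉ (C.inversionSet w).image (C.s (C.π i)) := by
    intro hmem
    obtain ⟨δ, hδmem, hδi⟩ := Finset.mem_image.1 hmem
    have hδ : δ = -C.π i := by rw [← C.s_s hΦi δ, hδi, C.s_apply_self hΦi]
    obtain ⟨-, hδpos, -⟩ := C.mem_inversionSet.1 (hδ ▸ hδmem)
    exact (C.isPos_iff_not_isNeg hΦi).1 (C.isPos_π i) hδpos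
  rw [inversionCount, C.inversionSet_mul_s_π hw hpos, Finset.card_insert_of_notMem hnotMem,
    Finset.card_image_of_injective _ (C.s (C.π i)).injective, inversionCount]

theorem inversionCount_mul_s_π_of_isNeg {w : V ≃ₗ[ℝ] V} (hw : w ∈ C.W) {i : Fin C.r}
    (hneg : C.IsNeg (w (C.π i))) :
    C.inversionCount (w * C.s (C.π i)) + 1 = C.inversionCount w := by
  have hΦi := C.simple_mem i
  have hpos : C.IsPos ((w * C.s (C.π i)) (C.π i)) := by
    rwa [LinearEquiv.mul_apply, C.s_apply_self hΦi, map_neg, ← isNeg_neg, neg_neg]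
  rw [← C.inversionCount_mul_s_π_of_isPos (mul_mem hw (C.s_mem_W hΦi)) hpos, mul_assoc,
    C.s_mul_self hΦi, mul_one]

theorem inversionCount_wordProd_le (l : List (Fin C.r)) :
    C.inversionCount (C.wordProd l) ≤ l.length := by
  induction l using List.reverseRecOn with
  | nil =>
    simp [inversionCount, wordProd_nil,
      C.inversionSet_eq_empty (one_mem _) fun i => C.isPos_π i]
  | append_singleton l i ih =>
    have hw := C.wordProd_mem_W l
    rw [wordProd_append, wordProd_singleton, List.length_append, List.length_singleton]
    rcases C.pos_or_neg _ (C.apply_mem_Φ hw (C.simple_mem i)) with h | h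
    · rw [C.inversionCount_mul_s_π_of_isPos hw h]
      omega
    · have := C.inversionCount_mul_s_π_of_isNeg hw h
      omega

/-- The deletion condition. -/
theorem exists_wordProd_eq_mul_s_π (l : List (Fin C.r)) {j : Fin C.r}
    (h : C.IsNeg (C.wordProd l (C.π j))) :
    ∃ l' : List (Fin C.r), l'.length + 1 = l.length ∧
      C.wordProd l' = C.wordProd l * C.s (C.π j) := by
  induction l with
  | nil =>
    exact absurd h ((C.isPos_iff_not_isNeg (C.simple_mem j)).1 (C.isPos_π j))
  | cons i t ih =>
    rw [wordProd_cons, LinearEquiv.mul_apply] at h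
    rw [wordProd_cons]
    have htΦ := C.apply_mem_Φ (C.wordProd_mem_W t) (C.simple_mem j)
    by_cases hn : C.IsNeg (C.wordProd t (C.π j))
    · obtain ⟨t', hlen, ht'⟩ := ih hn
      exact ⟨i :: t', by simp [hlen], by rw [wordProd_cons, ht', mul_assoc]⟩
    · -- `s_i` sends the positive root `t (π j)` to a negative one, so it is `π i`
      have heq : C.wordProd t (C.π j) = C.π i := by
        by_contra hne
        exact (C.isPos_iff_not_isNeg (C.refl_stable _ (C.simple_mem i) _ htΦ)).1
          (C.isPos_s_π htΦ ((C.isPos_iff_not_isNeg htΦ).2 hn) hne) h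
      refine ⟨t, by simp, ?_⟩
      rw [← heq, ← C.mul_s_mul_inv (C.wordProd_mem_W t) (C.simple_mem j), mul_assoc, mul_assoc,
        inv_mul_cancel_left, mul_assoc, C.s_mul_self (C.simple_mem j), mul_one]

theorem length_mul_s_π_lt_of_isNeg {g : V ≃ₗ[ℝ] V} (hg : g ∈ C.W) {j : Fin C.r}
    (h : C.IsNeg (g (C.π j))) : C.length (g * C.s (C.π j)) < C.length g := by
  obtain ⟨l, hlen, rfl⟩ := C.exists_reduced_word hg
  obtain ⟨l', hlen', hl'⟩ := C.exists_wordProd_eq_mul_s_π l h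
  have := C.length_wordProd_le l'
  rw [hl'] at this
  omega

theorem length_wordProd_le_inversionCount (l : List (Fin C.r)) :
    C.length (C.wordProd l) ≤ C.inversionCount (C.wordProd l) := by
  induction l using List.reverseRecOn with
  | nil => exact (C.length_wordProd_le []).trans (Nat.zero_le _)
  | append_singleton l i ih =>
    have hw := C.wordProd_mem_W l
    rw [wordProd_append, wordProd_singleton]
    rcases C.pos_or_neg _ (C.apply_mem_Φ hw (C.simple_mem i)) with h | h
    · rw [C.inversionCount_mul_s_π_of_isPos hw h]
      have := C.length_mul_s_π_le hw i
      omega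
    · have := C.inversionCount_mul_s_π_of_isNeg hw h
      have := C.length_mul_s_π_lt_of_isNeg hw h
      omega

theorem length_eq_inversionCount {g : V ≃ₗ[ℝ] V} (hg : g ∈ C.W) :
    C.length g = C.inversionCount g := by
  obtain ⟨l, hlen, rfl⟩ := C.exists_reduced_word hg
  exact le_antisymm (C.length_wordProd_le_inversionCount l)
    (hlen ▸ C.inversionCount_wordProd_le l)

theorem length_lt_mul_s_π_of_isPos {g : V ≃ₗ[ℝ] V} (hg : g ∈ C.W) {j : Fin C.r}
    (h : C.IsPos (g (C.π j))) : C.length g < C.length (g * C.s (C.π j)) := by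
  rw [C.length_eq_inversionCount hg,
    C.length_eq_inversionCount (mul_mem hg (C.s_mem_W (C.simple_mem j))),
    C.inversionCount_mul_s_π_of_isPos hg h]
  exact Nat.lt_succ_self _

theorem eq_one_of_forall_isPos {g : V ≃ₗ[ℝ] V} (hg : g ∈ C.W) (h : ∀ i, C.IsPos (g (C.π i))) :
    g = 1 := by
  refine C.eq_one_of_length_eq_zero hg ?_
  rw [C.length_eq_inversionCount hg, inversionCount, C.inversionSet_eq_empty hg h,
    Finset.card_empty]

theorem exists_eq_π_of_eq_sum {ι : Type*} [Fintype ι] {i : Fin C.r} (c : ι → ℝ)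
    (hc : ∀ k, 0 ≤ c k) (δ : ι → V) (hδΦ : ∀ k, δ k ∈ C.Φ) (hδpos : ∀ k, C.IsPos (δ k))
    (h : C.π i = ∑ k, c k • δ k) : ∃ k, δ k = C.π i := by
  obtain ⟨k, hk⟩ : ∃ k, c k ≠ 0 := by
    by_contra! hzero
    exact C.root_ne_zero _ (C.simple_mem i) (by simp [h, hzero])
  refine ⟨k, C.eq_π_of_coord_eq_zero (hδΦ k) (hδpos k) fun j hj => ?_⟩
  have hsum : ∑ m, c m * C.coord j (δ m) = 0 := by
    have := congrArg (C.coord j) h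
    rw [coord_π, if_neg hj.symm, map_sum] at this
    simpa using this.symm
  have hterm := (Finset.sum_eq_zero_iff_of_nonneg fun m _ =>
    mul_nonneg (hc m) (C.isPos_iff.1 (hδpos m) j)).1 hsum k (Finset.mem_univ k)
  exact (mul_eq_zero.1 hterm).resolve_left hk

def IsLongest (w₀ : V ≃ₗ[ℝ] V) : Prop := w₀ ∈ C.W ∧ ∀ u ∈ C.W, C.length u ≤ C.length w₀

namespace IsLongest

variable {C} {w₀ : V ≃ₗ[ℝ] V}

theorem isNeg_apply_π (hw₀ : C.IsLongest w₀) (i : Fin C.r) : C.IsNeg (w₀ (C.π i)) := by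
  by_contra h
  have hpos := (C.isPos_iff_not_isNeg (C.apply_mem_Φ hw₀.1 (C.simple_mem i))).2 h
  exact (C.length_lt_mul_s_π_of_isPos hw₀.1 hpos).not_ge
    (hw₀.2 _ (mul_mem hw₀.1 (C.s_mem_W (C.simple_mem i))))

theorem isNeg_apply_of_isPos (hw₀ : C.IsLongest w₀) {α : V} (hα : C.IsPos α) : C.IsNeg (w₀ α) :=
  C.isPos_map (-w₀.toLinearMap) hα fun i _ => hw₀.isNeg_apply_π i

theorem isPos_apply_iff (hw₀ : C.IsLongest w₀) {α : V} (hα : α ∈ C.Φ) :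
    C.IsPos (w₀ α) ↔ C.IsNeg α := by
  refine ⟨fun h => (C.isNeg_iff_not_isPos hα).2 fun hpos =>
    (C.isPos_iff_not_isNeg (C.apply_mem_Φ hw₀.1 hα)).1 h (hw₀.isNeg_apply_of_isPos hpos),
    fun h => ?_⟩
  have := hw₀.isNeg_apply_of_isPos h
  rwa [map_neg, isNeg_neg] at this

theorem apply_apply (hw₀ : C.IsLongest w₀) (x : V) : w₀ (w₀ x) = x := by
  have hsq : w₀ * w₀ = 1 := C.eq_one_of_forall_isPos (mul_mem hw₀.1 hw₀.1) fun i =>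
    (hw₀.isPos_apply_iff (C.apply_mem_Φ hw₀.1 (C.simple_mem i))).2 (hw₀.isNeg_apply_π i)
  simpa using LinearEquiv.congr_fun hsq x

theorem exists_apply_π_eq_neg (hw₀ : C.IsLongest w₀) (i : Fin C.r) :
    ∃ j, w₀ (C.π i) = -C.π j ∧ w₀ (C.π j) = -C.π i := by
  have hγ : C.π i = ∑ k, C.coord k (-w₀ (C.π i)) • -w₀ (C.π k) := calc
    C.π i = -w₀ (-w₀ (C.π i)) := by rw [map_neg, hw₀.apply_apply, neg_neg]
    _ = -w₀ (∑ k, C.coord k (-w₀ (C.π i)) • C.π k) := by rw [C.sum_coord_smul_π]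
    _ = _ := by simp [Finset.sum_neg_distrib]
  obtain ⟨j, hj⟩ := C.exists_eq_π_of_eq_sum _ (C.isPos_iff.1 (hw₀.isNeg_apply_π i)) _
    (fun k => C.neg_mem_Φ (C.apply_mem_Φ hw₀.1 (C.simple_mem k))) hw₀.isNeg_apply_π hγ
  refine ⟨j, ?_, by rw [← hj, neg_neg]⟩
  rw [← hj, map_neg, hw₀.apply_apply]

end IsLongest

theorem coord_apply_of_mem_parabolicSubgroup {J : Set (Fin C.r)} {z : V ≃ₗ[ℝ] V}
    (hz : z ∈ C.parabolicSubgroup J) {k : Fin C.r} (hk : k ∉ J) (x : V) :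
    C.coord k (z x) = C.coord k x := by
  induction hz using Subgroup.closure_induction generalizing x with
  | mem g hg =>
    obtain ⟨i, hi, rfl⟩ := hg
    exact C.coord_s_π_of_ne (by rintro rfl; exact hk hi) x
  | one => rfl
  | mul g h _ _ hg hh => rw [LinearEquiv.mul_apply, hg, hh]
  | inv g _ hg => rw [← hg, LinearEquiv.coe_inv, LinearEquiv.apply_symm_apply]

/-- The inversions of `z` are supported on `J`, the `z⁻¹`-translates of those of `u` are not. -/
theorem inversionCount_add_le_inversionCount_mul {J : Set (Fin C.r)} {u : V ≃ₗ[ℝ] V}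
    (hu : u ∈ C.W) (hJ : ∀ i ∈ J, C.IsPos (u (C.π i))) {z : V ≃ₗ[ℝ] V}
    (hz : z ∈ C.parabolicSubgroup J) :
    C.inversionCount u + C.inversionCount z ≤ C.inversionCount (u * z) := by
  have hzW : z ∈ C.W := C.parabolic_le J hz
  have hcoord := fun {k} (hk : k ∉ J) => C.coord_apply_of_mem_parabolicSubgroup hz hk
  have hu_pos : ∀ β, C.IsPos β → (∀ k ∉ J, C.coord k β = 0) → C.IsPos (u β) := fun β hβ hsupp =>
    C.isPos_map u.toLinearMap hβ fun i hi => hJ i (by_contra fun hiJ => hi.ne' (hsupp i hiJ))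
  have hz_inv : ∀ α ∈ C.inversionSet z, α ∈ C.inversionSet (u * z) ∧ ∀ k ∉ J, C.coord k α = 0 := by
    intro α hα
    obtain ⟨hαΦ, hpos, hneg⟩ := C.mem_inversionSet.1 hα
    have hsupp : ∀ k ∉ J, C.coord k α = 0 := fun k hk =>
      le_antisymm (hcoord hk α ▸ C.isNeg_iff.1 hneg k) (C.isPos_iff.1 hpos k)
    refine ⟨C.mem_inversionSet.2 ⟨hαΦ, hpos, ?_⟩, hsupp⟩
    have := hu_pos _ hneg fun k hk => by rw [map_neg, hcoord hk, hsupp k hk, neg_zero]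
    rwa [map_neg, ← isNeg_neg, neg_neg] at this
  have hu_inv : ∀ β ∈ C.inversionSet u,
      z⁻¹ β ∈ C.inversionSet (u * z) ∧ ¬ ∀ k ∉ J, C.coord k (z⁻¹ β) = 0 := by
    intro β hβ
    obtain ⟨hβΦ, hpos, hneg⟩ := C.mem_inversionSet.1 hβ
    obtain ⟨k, hk, hβk⟩ : ∃ k ∉ J, C.coord k β ≠ 0 := by
      by_contra! hsupp
      exact (C.isPos_iff_not_isNeg (C.apply_mem_Φ hu hβΦ)).1 (hu_pos β hpos hsupp) hneg
    have hzβ : z (z⁻¹ β) = β := by rw [LinearEquiv.coe_inv, LinearEquiv.apply_symm_apply]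
    have hzβk : C.coord k (z⁻¹ β) = C.coord k β := by rw [← hcoord hk, hzβ]
    have hzβpos : 0 < C.coord k (z⁻¹ β) := hzβk ▸ (C.isPos_iff.1 hpos k).lt_of_ne' hβk
    refine ⟨C.mem_inversionSet.2 ⟨C.apply_mem_Φ (inv_mem hzW) hβΦ,
      C.isPos_of_coord_pos (C.apply_mem_Φ (inv_mem hzW) hβΦ) hzβpos, ?_⟩,
      fun hsupp => hzβpos.ne' (hsupp k hk)⟩
    rwa [LinearEquiv.mul_apply, hzβ]
  have hdisj : Disjoint (C.inversionSet z) ((C.inversionSet u).image ⇑z⁻¹) :=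
    Finset.disjoint_left.2 fun α hα hα' => by
      obtain ⟨β, hβ, rfl⟩ := Finset.mem_image.1 hα'
      exact (hu_inv β hβ).2 (hz_inv _ hα).2
  calc C.inversionCount u + C.inversionCount z
      = (C.inversionSet z ∪ (C.inversionSet u).image ⇑z⁻¹).card := by
        rw [Finset.card_union_of_disjoint hdisj, Finset.card_image_of_injective _ (z⁻¹).injective,
          inversionCount, inversionCount, add_comm]
    _ ≤ C.inversionCount (u * z) := Finset.card_le_card <| Finset.union_subset
        (fun α hα => (hz_inv α hα).1)
        (fun α hα => by obtain ⟨β, hβ, rfl⟩ := Finset.mem_image.1 hα; exact (hu_inv β hβ).1)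

theorem fixSubgroup_eq_parabolicSubgroup (x : V) :
    C.fixSubgroup x = C.parabolicSubgroup {i | C.s (C.π i) x = x} := rfl

theorem length_lt_length_mul_of_mem_parabolicSubgroup {J : Set (Fin C.r)} {u : V ≃ₗ[ℝ] V}
    (hu : u ∈ C.W) (hJ : ∀ i ∈ J, C.IsPos (u (C.π i))) {z : V ≃ₗ[ℝ] V}
    (hz : z ∈ C.parabolicSubgroup J) (hz1 : z ≠ 1) : C.length u < C.length (u * z) := by
  have hzW : z ∈ C.W := C.parabolic_le J hz
  have hpos : 0 < C.inversionCount z := by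
    rw [← C.length_eq_inversionCount hzW, Nat.pos_iff_ne_zero]
    exact fun h => hz1 (C.eq_one_of_length_eq_zero hzW h)
  rw [C.length_eq_inversionCount hu, C.length_eq_inversionCount (mul_mem hu hzW)]
  linarith [C.inversionCount_add_le_inversionCount_mul hu hJ hz]

theorem inner_ω_π (k j : Fin C.r) :
    ⟪C.ω k, C.π j⟫_ℝ = if k = j then ⟪C.π j, C.π j⟫_ℝ / 2 else 0 := by
  have h := C.fund k j
  have hpos := C.inner_self_pos (C.simple_mem j)
  split_ifs at h ⊢ <;> field_simp at h <;> linarith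

theorem inner_sum_ω_π_eq_zero_iff (S : Finset (Fin C.r)) (j : Fin C.r) :
    ⟪∑ k ∈ S, C.ω k, C.π j⟫_ℝ = 0 ↔ j ∉ S := by
  rw [sum_inner, Finset.sum_congr rfl fun k _ => C.inner_ω_π k j, Finset.sum_ite_eq']
  split_ifs with h <;> simp [h, C.root_ne_zero _ (C.simple_mem j)]

theorem apply_steinberg (v : V ≃ₗ[ℝ] V) :
    v (C.steinberg v) = ∑ k ∈ Finset.univ.filter (fun k => C.IsNeg (v⁻¹ (C.π k))), C.ω k := by
  rw [steinberg, LinearEquiv.coe_inv, LinearEquiv.apply_symm_apply]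

theorem isNeg_conj_apply_π_iff {v w₀ : V ≃ₗ[ℝ] V} (hv : v ∈ C.W) (hw₀ : C.IsLongest w₀)
    (i : Fin C.r) :
    C.IsNeg ((w₀ * v⁻¹ * w₀) (C.π i)) ↔
      ¬ C.s (C.π i) (w₀ (v (C.steinberg v))) = w₀ (v (C.steinberg v)) := by
  obtain ⟨j, hij, hji⟩ := hw₀.exists_apply_π_eq_neg i
  have hinner : ∀ x, ⟪w₀ x, C.π i⟫_ℝ = -⟪x, C.π j⟫_ℝ := fun x => by
    rw [← neg_neg (C.π i), ← hji, inner_neg_right, C.inner_invariant w₀ hw₀.1]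
  rw [LinearEquiv.mul_apply, LinearEquiv.mul_apply, hij, map_neg, map_neg, isNeg_neg,
    hw₀.isPos_apply_iff (C.apply_mem_Φ (inv_mem hv) (C.simple_mem j)),
    C.s_apply_eq_self_iff (C.simple_mem i), hinner, neg_eq_zero, apply_steinberg,
    inner_sum_ω_π_eq_zero_iff, not_not, Finset.mem_filter, and_iff_right (Finset.mem_univ j)]

end RootSystemData

/-- Let `v ∈ W` and let `J` consist of the simple reflections fixing
`w₀ ⬝ (v ⬝ e_v)`.  Then for every simple root `β`, the root `(w₀ v⁻¹ w₀)(β)` is negative iff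
`s_β ∉ J`; consequently `w₀ v⁻¹ w₀` is the unique minimal-length element of its coset
`(w₀ v⁻¹ w₀) W_J`. -/
theorem statement_11
    {V : Type} [NormedAddCommGroup V] [InnerProductSpace ℝ V] [FiniteDimensional ℝ V]
    (C : RootSystemData V)
    (v w₀ : V ≃ₗ[ℝ] V) (hv : v ∈ C.W) (hw₀ : w₀ ∈ C.W)
    (hlong : ∀ u ∈ C.W, C.length u ≤ C.length w₀) :
    (∀ i : Fin C.r,
        C.IsNeg ((w₀ * v⁻¹ * w₀) (C.π i)) ↔
          ¬ C.s (C.π i) (w₀ (v (C.steinberg v))) = w₀ (v (C.steinberg v))) ∧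
    (∀ z ∈ C.fixSubgroup (w₀ (v (C.steinberg v))),
        w₀ * v⁻¹ * w₀ * z ≠ w₀ * v⁻¹ * w₀ →
          C.length (w₀ * v⁻¹ * w₀) < C.length (w₀ * v⁻¹ * w₀ * z)) := by
  have hlongest : C.IsLongest w₀ := ⟨hw₀, hlong⟩
  have hu : w₀ * v⁻¹ * w₀ ∈ C.W := mul_mem (mul_mem hw₀ (inv_mem hv)) hw₀
  refine ⟨C.isNeg_conj_apply_π_iff hv hlongest, fun z hz hne => ?_⟩
  rw [C.fixSubgroup_eq_parabolicSubgroup] at hz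
  refine C.length_lt_length_mul_of_mem_parabolicSubgroup hu (fun i hi => ?_) hz
    fun h => hne (by rw [h, mul_one])
  rw [C.isPos_iff_not_isNeg (C.apply_mem_Φ hu (C.simple_mem i)),
    C.isNeg_conj_apply_π_iff hv hlongest, not_not]
  exact hi
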